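/- Assume (H). For every r > 0, E( sup_{f ∈ rB_H} | ‖f‖²_{L²(P_n)} − ‖f‖²_{L²(P)} | ) ≤ 8‖k‖²_∞ r² / n^{1/2}. -/

import Mathlib

/-!
For `f ∈ H` the square of an evaluation is linear in the feature `Φ x ⊗ Φ x`:
`f(x)² = ⟪f ⊗ f, Φ x ⊗ Φ x⟫`, and `‖f ⊗ f‖ = ‖f‖²`. Hence the supremum over `r B_H` is at most
`r²` times the norm of the deviation between the empirical and the true mean of these features,
whose norms are at most `κ²`. By independence the centred features are orthogonal in `L²(μ)`, so
the expected squared deviation is at most `(2κ²)² / n`, and Cauchy–Schwarz bounds the expected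
deviation by `2κ² / √n`.
-/

open MeasureTheory ProbabilityTheory Real
open scoped BigOperators

noncomputable def ev {S H : Type*} [NormedAddCommGroup H] [InnerProductSpace ℝ H]
    (Φ : S → H) (f : H) (x : S) : ℝ := inner ℝ f (Φ x)

open Filter
open scoped InnerProductSpace TensorProduct ENNReal

section Measurability

variable {S G : Type*} [MeasurableSpace S] [NormedAddCommGroup G] [InnerProductSpace ℝ G]
  {Φ : S → G}

lemma measurable_inner_of_mem_span (hk : Measurable fun p : S × S => ⟪Φ p.1, Φ p.2⟫_ℝ)
    {u : G} (hu : u ∈ Submodule.span ℝ (Set.range Φ)) : Measurable fun x => ⟪u, Φ x⟫_ℝ := by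
  induction hu using Submodule.span_induction with
  | mem v hv =>
    obtain ⟨y, rfl⟩ := hv
    exact hk.comp (measurable_const.prodMk measurable_id)
  | zero => simp
  | add v w _ _ hv hw =>
    simp only [inner_add_left]
    exact hv.add hw
  | smul t v _ hv => simpa only [real_inner_smul_left] using hv.const_mul t

lemma stronglyMeasurable_starProjection_of_le_span
    (hk : Measurable fun p : S × S => ⟪Φ p.1, Φ p.2⟫_ℝ) (U : Submodule ℝ G) [FiniteDimensional ℝ U]
    (hU : U ≤ Submodule.span ℝ (Set.range Φ)) :
    StronglyMeasurable fun x => U.starProjection (Φ x) := by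
  let b := stdOrthonormalBasis ℝ U
  simp_rw [Submodule.starProjection_apply, b.orthogonalProjectionOnto_apply_eq_sum,
    Submodule.coe_sum, Submodule.coe_smul]
  exact Finset.stronglyMeasurable_fun_sum _ fun i _ =>
    (measurable_inner_of_mem_span hk (hU (b i).2)).stronglyMeasurable.smul_const _

/-- `Φ x` is the limit of its projections onto the spans of finitely many points of a countable
dense subset of `range Φ` (completeness provides the projection onto their closed span), and these
projections have measurable coordinates. -/
lemma stronglyMeasurable_of_measurable_kernel_of_completeSpace [CompleteSpace G]
    [SecondCountableTopology G] (hk : Measurable fun p : S × S => ⟪Φ p.1, Φ p.2⟫_ℝ) :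
    StronglyMeasurable Φ := by
  obtain ⟨C, hCΦ, hC, hΦC⟩ :=
    (TopologicalSpace.IsSeparable.of_separableSpace (Set.range Φ)).exists_countable_dense_subset
  have : Countable C := hC.to_subtype
  let U : Finset C → Submodule ℝ G := fun t => Submodule.span ℝ (Subtype.val '' (t : Set C))
  have hU : Monotone U := fun t t' h => Submodule.span_mono (Set.image_mono h)
  have hUΦ (t : Finset C) : U t ≤ Submodule.span ℝ (Set.range Φ) :=
    Submodule.span_le.2 fun _ ⟨c, _, hc⟩ => hc ▸ Submodule.subset_span (hCΦ c.2)
  have hmem (x : S) : Φ x ∈ (⨆ t, U t).topologicalClosure := by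
    refine closure_mono (fun c hc => ?_) (hΦC ⟨x, rfl⟩)
    exact Submodule.mem_iSup_of_mem {⟨c, hc⟩} (Submodule.subset_span ⟨⟨c, hc⟩, by simp, rfl⟩)
  have (t : Finset C) : FiniteDimensional ℝ (U t) :=
    FiniteDimensional.span_of_finite ℝ (t.finite_toSet.image _)
  refine stronglyMeasurable_of_tendsto atTop
    (fun t => stronglyMeasurable_starProjection_of_le_span hk (U t) (hUΦ t)) ?_
  refine tendsto_pi_nhds.2 fun x => ?_
  convert Submodule.starProjection_tendsto_closure_iSup U hU (Φ x)
  exact (Submodule.starProjection_eq_self_iff.2 (hmem x)).symm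

lemma stronglyMeasurable_of_measurable_kernel [SecondCountableTopology G]
    (hk : Measurable fun p : S × S => ⟪Φ p.1, Φ p.2⟫_ℝ) : StronglyMeasurable Φ := by
  have : SecondCountableTopology (UniformSpace.Completion G) :=
    UniformSpace.secondCountable_of_separable _
  refine (Embedding.comp_stronglyMeasurable_iff
    (UniformSpace.Completion.isUniformEmbedding_coe G).isEmbedding).1 ?_
  refine stronglyMeasurable_of_measurable_kernel_of_completeSpace ?_
  simpa only [UniformSpace.Completion.inner_coe] using hk

end Measurability

lemma integral_le_sqrt_integral_sq {Ω : Type*} [MeasurableSpace Ω] {μ : Measure Ω}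
    [IsProbabilityMeasure μ] {f : Ω → ℝ} (hf : MemLp f 2 μ) :
    ∫ ω, f ω ∂μ ≤ √(∫ ω, f ω ^ 2 ∂μ) := by
  have h := variance_nonneg f μ
  rw [variance_eq_sub hf] at h
  exact (le_abs_self _).trans (Real.abs_le_sqrt (by simpa using h))

section MeanDeviation

variable {Ω S E : Type*} [MeasurableSpace Ω] {μ : Measure Ω} [MeasurableSpace S] {P : Measure S}
  [NormedAddCommGroup E] [InnerProductSpace ℝ E] {Ψ : S → E}

lemma integral_norm_sum_sq_eq_sum_integral_norm_sq {ι : Type*} [Fintype ι] {Y : ι → Ω → E}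
    (hint : ∀ i j, Integrable (fun ω => ⟪Y i ω, Y j ω⟫_ℝ) μ)
    (horth : Pairwise fun i j => ∫ ω, ⟪Y i ω, Y j ω⟫_ℝ ∂μ = 0) :
    ∫ ω, ‖∑ i, Y i ω‖ ^ 2 ∂μ = ∑ i, ∫ ω, ‖Y i ω‖ ^ 2 ∂μ := by
  classical
  simp_rw [← real_inner_self_eq_norm_sq, sum_inner, inner_sum]
  rw [integral_finsetSum _ fun i _ => integrable_finsetSum _ fun j _ => hint i j]
  refine Finset.sum_congr rfl fun i _ => ?_
  rw [integral_finsetSum _ fun j _ => hint i j]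
  exact Finset.sum_eq_single_of_mem i (Finset.mem_univ i) fun j _ hji => horth (Ne.symm hji)

noncomputable def meanDeviation {n : ℕ} (Ψ : S → E) (P : Measure S) (x : Fin n → S) : E :=
  (n : ℝ)⁻¹ • ∑ i, Ψ (x i) - ∫ y, Ψ y ∂P

lemma meanDeviation_eq_smul_sum {n : ℕ} (hn : n ≠ 0) (x : Fin n → S) :
    meanDeviation Ψ P x = (n : ℝ)⁻¹ • ∑ i, (Ψ (x i) - ∫ y, Ψ y ∂P) := by
  rw [meanDeviation, Finset.sum_sub_distrib, smul_sub, Finset.sum_const, Finset.card_univ,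
    Fintype.card_fin, ← Nat.cast_smul_eq_nsmul ℝ, smul_smul, inv_mul_cancel₀ (by exact_mod_cast hn),
    one_smul]

lemma norm_meanDeviation_le [IsProbabilityMeasure P] {c : ℝ} (hc : ∀ x, ‖Ψ x‖ ≤ c) {n : ℕ}
    (x : Fin n → S) : ‖meanDeviation Ψ P x‖ ≤ 2 * c := by
  have hint : ‖∫ y, Ψ y ∂P‖ ≤ c := by
    simpa using norm_integral_le_of_norm_le_const (μ := P) (Eventually.of_forall hc)
  have hmean : ‖(n : ℝ)⁻¹ • ∑ i, Ψ (x i)‖ ≤ c := by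
    calc ‖(n : ℝ)⁻¹ • ∑ i, Ψ (x i)‖ ≤ (n : ℝ)⁻¹ * (n * c) := by
          rw [norm_smul, Real.norm_of_nonneg (by positivity)]
          gcongr
          simpa using norm_sum_le_of_le Finset.univ fun i _ => hc (x i)
      _ ≤ c := by
          rw [← mul_assoc]
          exact mul_le_of_le_one_left ((norm_nonneg _).trans hint)
            (inv_mul_le_one_of_le₀ le_rfl (Nat.cast_nonneg n))
  calc ‖meanDeviation Ψ P x‖ ≤ c + c := (norm_sub_le _ _).trans (add_le_add hmean hint)
    _ = 2 * c := by ring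

lemma memLp_norm_meanDeviation [IsFiniteMeasure μ] [IsProbabilityMeasure P]
    (hΨ : StronglyMeasurable Ψ) {c : ℝ} (hc : ∀ x, ‖Ψ x‖ ≤ c) {n : ℕ} {X : Fin n → Ω → S}
    (hX : ∀ i, Measurable (X i)) {p : ℝ≥0∞} :
    MemLp (fun ω => ‖meanDeviation Ψ P (fun i => X i ω)‖) p μ := by
  refine MemLp.of_bound ?_ (2 * c) (Eventually.of_forall fun ω => ?_)
  · exact (((Finset.stronglyMeasurable_fun_sum _ fun i _ => hΨ.comp_measurable (hX i)).const_smul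
      _).sub stronglyMeasurable_const).norm.aestronglyMeasurable
  · simpa using norm_meanDeviation_le hc _

variable [CompleteSpace E]

lemma integral_inner_sub_integral_eq_zero_of_indepFun [IsProbabilityMeasure P]
    (hΨ : Integrable Ψ P) {X Y : Ω → S} (hXY : IndepFun X Y μ) (hX : Measurable X)
    (hY : Measurable Y) (hPX : μ.map X = P) (hPY : μ.map Y = P) :
    ∫ ω, ⟪Ψ (X ω) - ∫ x, Ψ x ∂P, Ψ (Y ω) - ∫ x, Ψ x ∂P⟫_ℝ ∂μ = 0 := by
  set m := ∫ x, Ψ x ∂P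
  have hc : Integrable (fun x => Ψ x - m) P := hΨ.sub (integrable_const _)
  have hcentered {Z : Ω → S} (hZ : Measurable Z) (hPZ : μ.map Z = P) :
      ∫ ω, (Ψ (Z ω) - m) ∂μ = 0 := by
    rw [← integral_map (f := fun x => Ψ x - m) hZ.aemeasurable (hPZ ▸ hc.aestronglyMeasurable),
      hPZ, integral_sub hΨ (integrable_const _)]
    simp [m]
  have h := hXY.integral_bilin_comp_comp hX.aemeasurable hY.aemeasurable
    (by rwa [hPX]) (by rwa [hPY]) (innerSL ℝ)
  exact h.trans (by simp [hcentered hX hPX])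

lemma integral_norm_sum_sub_integral_sq_le [IsProbabilityMeasure μ] [IsProbabilityMeasure P]
    (hΨ : StronglyMeasurable Ψ) {c : ℝ} (hc : ∀ x, ‖Ψ x‖ ≤ c) {ι : Type*} [Fintype ι]
    {X : ι → Ω → S} (hX : ∀ i, Measurable (X i)) (hiid : iIndepFun X μ)
    (hPX : ∀ i, μ.map (X i) = P) :
    ∫ ω, ‖∑ i, (Ψ (X i ω) - ∫ y, Ψ y ∂P)‖ ^ 2 ∂μ ≤ Fintype.card ι * (2 * c) ^ 2 := by
  set Y : ι → Ω → E := fun i ω => Ψ (X i ω) - ∫ y, Ψ y ∂P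
  have hm : ‖∫ y, Ψ y ∂P‖ ≤ c := by
    simpa using norm_integral_le_of_norm_le_const (μ := P) (Eventually.of_forall hc)
  have hY_meas (i : ι) : StronglyMeasurable (Y i) :=
    (hΨ.comp_measurable (hX i)).sub stronglyMeasurable_const
  have hY_le (i : ι) (ω : Ω) : ‖Y i ω‖ ≤ 2 * c := by
    calc ‖Y i ω‖ ≤ c + c := (norm_sub_le _ _).trans (add_le_add (hc _) hm)
      _ = 2 * c := by ring
  have hY_inner_int (i j : ι) : Integrable (fun ω => ⟪Y i ω, Y j ω⟫_ℝ) μ :=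
    Integrable.of_bound ((hY_meas i).inner (hY_meas j)).aestronglyMeasurable ((2 * c) * (2 * c))
      (Eventually.of_forall fun ω => (norm_inner_le_norm _ _).trans
        (mul_le_mul (hY_le i ω) (hY_le j ω) (norm_nonneg _) ((norm_nonneg _).trans (hY_le i ω))))
  have hY_sq_le (i : ι) : ∫ ω, ‖Y i ω‖ ^ 2 ∂μ ≤ (2 * c) ^ 2 := by
    have h := norm_integral_le_of_norm_le_const (μ := μ) (f := fun ω => ‖Y i ω‖ ^ 2)
      (Eventually.of_forall fun ω => by
        simpa using pow_le_pow_left₀ (norm_nonneg _) (hY_le i ω) 2)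
    simp only [probReal_univ, mul_one, Real.norm_eq_abs] at h
    exact (le_abs_self _).trans h
  rw [integral_norm_sum_sq_eq_sum_integral_norm_sq hY_inner_int fun i j hij =>
    integral_inner_sub_integral_eq_zero_of_indepFun
      (Integrable.of_bound hΨ.aestronglyMeasurable c (Eventually.of_forall hc))
      (hiid.indepFun hij) (hX i) (hX j) (hPX i) (hPX j)]
  simpa using Finset.sum_le_sum (s := Finset.univ) fun i _ => hY_sq_le i

lemma integral_norm_meanDeviation_le [IsProbabilityMeasure μ] [IsProbabilityMeasure P]
    (hΨ : StronglyMeasurable Ψ) {c : ℝ} (hc : ∀ x, ‖Ψ x‖ ≤ c) {n : ℕ} (hn : 0 < n)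
    {X : Fin n → Ω → S} (hX : ∀ i, Measurable (X i)) (hiid : iIndepFun X μ)
    (hPX : ∀ i, μ.map (X i) = P) :
    ∫ ω, ‖meanDeviation Ψ P (fun i => X i ω)‖ ∂μ ≤ 2 * c / √n := by
  have hc0 : 0 ≤ c := by
    have := nonempty_of_isProbabilityMeasure P
    exact (norm_nonneg _).trans (hc (Classical.arbitrary S))
  have hsum_sq := integral_norm_sum_sub_integral_sq_le hΨ hc hX hiid hPX
  rw [Fintype.card_fin] at hsum_sq
  calc ∫ ω, ‖meanDeviation Ψ P (fun i => X i ω)‖ ∂μ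
      ≤ √(∫ ω, ‖meanDeviation Ψ P (fun i => X i ω)‖ ^ 2 ∂μ) :=
        integral_le_sqrt_integral_sq (memLp_norm_meanDeviation hΨ hc hX)
    _ = √((n : ℝ)⁻¹ ^ 2 * ∫ ω, ‖∑ i, (Ψ (X i ω) - ∫ y, Ψ y ∂P)‖ ^ 2 ∂μ) := by
        simp_rw [meanDeviation_eq_smul_sum hn.ne', norm_smul, mul_pow, integral_const_mul,
          Real.norm_of_nonneg (inv_nonneg.2 (Nat.cast_nonneg n))]
    _ ≤ √((n : ℝ)⁻¹ ^ 2 * (n * (2 * c) ^ 2)) := by gcongr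
    _ = 2 * c / √n := by
        have hn' : (n : ℝ) ≠ 0 := by exact_mod_cast hn.ne'
        rw [show (n : ℝ)⁻¹ ^ 2 * (n * (2 * c) ^ 2) = (2 * c) ^ 2 / n by field_simp,
          Real.sqrt_div (sq_nonneg _), Real.sqrt_sq (by linarith)]

end MeanDeviation

section FeatureMap

variable {S H : Type*} [NormedAddCommGroup H] [InnerProductSpace ℝ H]

/-- The completion is taken so that Bochner integrals of features exist. -/
noncomputable def tmulSelf (v : H) : UniformSpace.Completion (H ⊗[ℝ] H) :=
  ((v ⊗ₜ[ℝ] v : H ⊗[ℝ] H) : UniformSpace.Completion (H ⊗[ℝ] H))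

lemma inner_tmulSelf (u v : H) : ⟪tmulSelf u, tmulSelf v⟫_ℝ = ⟪u, v⟫_ℝ ^ 2 := by
  simp [tmulSelf, UniformSpace.Completion.inner_coe, sq]

lemma norm_tmulSelf (v : H) : ‖tmulSelf v‖ = ‖v‖ ^ 2 := by
  simp [tmulSelf, UniformSpace.Completion.norm_coe, sq]

lemma continuous_tmulSelf : Continuous (tmulSelf (H := H)) := by
  unfold tmulSelf
  fun_prop

lemma iSup_abs_average_sq_ev_sub_integral_le [MeasurableSpace S] {P : Measure S} {Φ : S → H}
    (hΦ : Integrable (fun x => tmulSelf (Φ x)) P) (r : ℝ) {n : ℕ} (x : Fin n → S) :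
    ⨆ f : Metric.closedBall (0 : H) r,
        |(1 / n : ℝ) * ∑ i, (ev Φ (f : H) (x i)) ^ 2 - ∫ y, (ev Φ (f : H) y) ^ 2 ∂P| ≤
      r ^ 2 * ‖meanDeviation (fun y => tmulSelf (Φ y)) P x‖ := by
  refine Real.iSup_le (fun f => ?_) (by positivity)
  have hlin : (1 / n : ℝ) * ∑ i, (ev Φ f (x i)) ^ 2 - ∫ y, (ev Φ f y) ^ 2 ∂P =
      ⟪tmulSelf (f : H), meanDeviation (fun y => tmulSelf (Φ y)) P x⟫_ℝ := by
    simp only [ev, ← inner_tmulSelf, meanDeviation, inner_sub_right, real_inner_smul_right,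
      inner_sum, one_div, integral_inner hΦ]
  rw [hlin]
  refine (abs_real_inner_le_norm _ _).trans ?_
  rw [norm_tmulSelf]
  gcongr
  exact mem_closedBall_zero_iff.1 f.2

end FeatureMap

theorem expected_sup_empirical_true_norms_general
    (Ω : Type*) [MeasurableSpace Ω] (μ : Measure Ω) [IsProbabilityMeasure μ]
    (S : Type*) [MeasurableSpace S] (P : Measure S) [IsProbabilityMeasure P]
    (H : Type*) [NormedAddCommGroup H] [InnerProductSpace ℝ H]
    [SecondCountableTopology H]
    (Φ : S → H) (κ : ℝ) (hκ : ∀ x, ‖Φ x‖ ≤ κ)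
    (hkmeas : Measurable fun p : S × S => (inner ℝ (Φ p.1) (Φ p.2) : ℝ))
    (n : ℕ) (hn : 0 < n)
    (X : Fin n → Ω → S) (hXm : ∀ i, Measurable (X i))
    (hiid : iIndepFun X μ)
    (hPX : ∀ i, Measure.map (X i) μ = P)
    (r : ℝ) :
    ∫ ω, (⨆ f : Metric.closedBall (0 : H) r,
        |(1 / n : ℝ) * ∑ i, (ev Φ (f : H) (X i ω))^2 - ∫ x, (ev Φ (f : H) x)^2 ∂P|) ∂μ ≤
      8 * κ^2 * r^2 / Real.sqrt (n : ℝ) := by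
  set Ψ : S → UniformSpace.Completion (H ⊗[ℝ] H) := fun x => tmulSelf (Φ x)
  have hΨ_meas : StronglyMeasurable Ψ :=
    continuous_tmulSelf.comp_stronglyMeasurable (stronglyMeasurable_of_measurable_kernel hkmeas)
  have hΨ_le (x : S) : ‖Ψ x‖ ≤ κ ^ 2 := by
    simpa only [Ψ, norm_tmulSelf] using pow_le_pow_left₀ (norm_nonneg _) (hκ x) 2
  have hΨ_int : Integrable Ψ P :=
    .of_bound hΨ_meas.aestronglyMeasurable _ (Eventually.of_forall hΨ_le)
  calc _ ≤ ∫ ω, r ^ 2 * ‖meanDeviation Ψ P (fun i => X i ω)‖ ∂μ :=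
        integral_mono_of_nonneg
          (Eventually.of_forall fun ω => Real.iSup_nonneg fun f => abs_nonneg _)
          (((memLp_norm_meanDeviation hΨ_meas hΨ_le hXm).integrable le_rfl).const_mul _)
          (Eventually.of_forall fun ω => iSup_abs_average_sq_ev_sub_integral_le hΨ_int r _)
    _ = r ^ 2 * ∫ ω, ‖meanDeviation Ψ P (fun i => X i ω)‖ ∂μ := integral_const_mul _ _
    _ ≤ r ^ 2 * (2 * κ ^ 2 / √n) := by
        gcongr
        exact integral_norm_meanDeviation_le hΨ_meas hΨ_le hn hXm hiid hPX
    _ ≤ 8 * κ ^ 2 * r ^ 2 / √n := by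
        rw [mul_div_assoc', show r ^ 2 * (2 * κ ^ 2) = 2 * κ ^ 2 * r ^ 2 by ring]
        gcongr
        norm_num

theorem expected_sup_empirical_true_norms
    (Ω : Type*) [MeasurableSpace Ω] (μ : Measure Ω) [IsProbabilityMeasure μ]
    (S : Type*) [MeasurableSpace S] (P : Measure S) [IsProbabilityMeasure P]
    (H : Type*) [NormedAddCommGroup H] [InnerProductSpace ℝ H]
    [SecondCountableTopology H] [MeasurableSpace H] [BorelSpace H]
    (Φ : S → H) (κ : ℝ) (hκ0 : 0 ≤ κ) (hκ : ∀ x, ‖Φ x‖ ≤ κ)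
    (hkmeas : Measurable fun p : S × S => (inner ℝ (Φ p.1) (Φ p.2) : ℝ))
    (n : ℕ) (hn : 0 < n)
    (X : Fin n → Ω → S) (hXm : ∀ i, Measurable (X i))
    (hiid : iIndepFun X μ)
    (hPX : ∀ i, Measure.map (X i) μ = P)
    (r : ℝ) (hr : 0 < r) :
    ∫ ω, (⨆ f : Metric.closedBall (0 : H) r,
        |(1 / n : ℝ) * ∑ i, (ev Φ (f : H) (X i ω))^2 - ∫ x, (ev Φ (f : H) x)^2 ∂P|) ∂μ ≤
      8 * κ^2 * r^2 / Real.sqrt (n : ℝ) :=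
  expected_sup_empirical_true_norms_general Ω μ S P H Φ κ hκ hkmeas n hn X hXm hiid hPX r
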